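/- arXiv:2101.09082 — 4 statements merged into one kernel-verified Lean document; each statement's English description precedes it below -/
import Mathlib

section
/- Let Φ ∈ ℂ^{M×N} and let δ ≥ 0 be a restricted isometry constant of order t for Φ. If U, V ∈ ℂ^{N×L} satisfy |supp(U) ∪ supp(V)| ≤ t, then |tr(U* (I − Φ*Φ) V)| ≤ δ · ‖U‖_F · ‖V‖_F. -/
/-
The form `B(U, V) = tr(U* (I − Φ*Φ) V)` is Hermitian, and the RIP says exactly that its quadratic
form satisfies `|B(Z, Z)| = |‖Z‖_F² − ‖ΦZ‖_F²| ≤ δ ‖Z‖_F²` on `t` row-sparse `Z`. Since `U ± V` are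
still `t` row-sparse, polarization and the parallelogram law give
`Re B(U, V) ≤ δ/2 (‖U‖_F² + ‖V‖_F²)`. Normalizing `U` and `V` and rotating `V` by a unit complex
number turns this into `|B(U, V)| ≤ δ ‖U‖_F ‖V‖_F`.
-/

open Matrix BigOperators

/-- Frobenius norm of a complex matrix. -/
noncomputable def frobNorm {m n : Type*} [Fintype m] [Fintype n] (A : Matrix m n ℂ) : ℝ :=
  Real.sqrt (∑ i, ∑ j, ‖A i j‖ ^ 2)

open scoped Classical in
/-- The row support of a matrix: indices of its nonzero rows. -/
noncomputable def rowSupp {N L : ℕ} (X : Matrix (Fin N) (Fin L) ℂ) : Finset (Fin N) :=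
  Finset.univ.filter (fun i => X i ≠ 0)

/-- `X_(T)`: the matrix obtained from `X` by zeroing every row with index outside `T`. -/
def rowRestrict {N L : ℕ} (T : Finset (Fin N)) (X : Matrix (Fin N) (Fin L) ℂ) :
    Matrix (Fin N) (Fin L) ℂ :=
  fun i j => if i ∈ T then X i j else 0

/-- Euclidean norm of a complex vector. -/
noncomputable def vecNorm {ι : Type*} [Fintype ι] (v : ι → ℂ) : ℝ :=
  Real.sqrt (∑ i, ‖v i‖ ^ 2)

/-- `Φ_T`: the submatrix of columns of `Φ` indexed by `T`. -/
def colSub {M N : ℕ} (Φ : Matrix (Fin M) (Fin N) ℂ) (T : Finset (Fin N)) :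
    Matrix (Fin M) {x // x ∈ T} ℂ :=
  fun i j => Φ i j.val

/-- `X_{(T)}`: the submatrix of rows of `X` indexed by `T`. -/
def rowSub {N L : ℕ} (T : Finset (Fin N)) (X : Matrix (Fin N) (Fin L) ℂ) :
    Matrix {x // x ∈ T} (Fin L) ℂ :=
  fun i j => X i.val j

/-- The set of values `‖R v‖` over unit vectors `v` (the "singular value range"). -/
noncomputable def sigmaSet {L : ℕ} (R : Matrix (Fin L) (Fin L) ℂ) : Set ℝ :=
  {c | ∃ v : Fin L → ℂ, vecNorm v = 1 ∧ c = vecNorm (R.mulVec v)}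

/-- The largest singular value of `R`. -/
noncomputable def sigmaMax {L : ℕ} (R : Matrix (Fin L) (Fin L) ℂ) : ℝ :=
  sSup (sigmaSet R)

/-- The smallest singular value of `R` (for invertible `R`). -/
noncomputable def sigmaMin {L : ℕ} (R : Matrix (Fin L) (Fin L) ℂ) : ℝ :=
  sInf (sigmaSet R)

/-- Spectral (operator) norm of a square complex matrix. -/
noncomputable def specNorm {ι : Type*} [Fintype ι] (A : Matrix ι ι ℂ) : ℝ :=
  sSup {c | ∃ v : ι → ℂ, vecNorm v = 1 ∧ c = vecNorm (A.mulVec v)}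

/-- `δ` is a restricted isometry constant (RIC) of order `t` for `A`, relative to matrices with
`L` columns: `(1-δ)‖Z‖_F² ≤ ‖AZ‖_F² ≤ (1+δ)‖Z‖_F²` for every `t` row-sparse `Z`. -/
def IsRIC {M N : ℕ} (L : ℕ) (A : Matrix (Fin M) (Fin N) ℂ) (t : ℕ) (δ : ℝ) : Prop :=
  ∀ Z : Matrix (Fin N) (Fin L) ℂ, (rowSupp Z).card ≤ t →
    (1 - δ) * frobNorm Z ^ 2 ≤ frobNorm (A * Z) ^ 2 ∧
      frobNorm (A * Z) ^ 2 ≤ (1 + δ) * frobNorm Z ^ 2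

/-- `γ` is a preconditioned restricted isometry constant (P-RIC) of order `t` for `Φ`:
`(1-γ)‖Z‖_F² ≤ Re tr((ΦZ)* (ΦΦ*)⁻¹ (ΦZ))` for every `t` row-sparse `Z`. -/
def IsPRIC {M N : ℕ} (L : ℕ) (Φ : Matrix (Fin M) (Fin N) ℂ) (t : ℕ) (γ : ℝ) : Prop :=
  ∀ Z : Matrix (Fin N) (Fin L) ℂ, (rowSupp Z).card ≤ t →
    (1 - γ) * frobNorm Z ^ 2 ≤ (Matrix.trace ((Φ * Z)ᴴ * ((Φ * Φᴴ)⁻¹ * (Φ * Z)))).re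

/-- `θ` is an upper restricted isometry constant of order `t` for `A`:
`‖AZ‖_F² ≤ (1+θ)‖Z‖_F²` for every `t` row-sparse `Z`. -/
def IsUpperRIC {M N : ℕ} (L : ℕ) (A : Matrix (Fin M) (Fin N) ℂ) (t : ℕ) (θ : ℝ) : Prop :=
  ∀ Z : Matrix (Fin N) (Fin L) ℂ, (rowSupp Z).card ≤ t →
    frobNorm (A * Z) ^ 2 ≤ (1 + θ) * frobNorm Z ^ 2

/-- The least-squares feedback of `X` on the index set `T`:
rows outside `T` are zero and on `T` it equals
`X_{(T)} + (Φ_T* Φ_T)⁻¹ Φ_T* Φ_{T^c} X_{(T^c)}`. -/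
noncomputable def feedback {M N L : ℕ} (Φ : Matrix (Fin M) (Fin N) ℂ) (T : Finset (Fin N))
    (X : Matrix (Fin N) (Fin L) ℂ) : Matrix (Fin N) (Fin L) ℂ :=
  fun i j =>
    if h : i ∈ T then
      (rowSub T X +
        ((colSub Φ T)ᴴ * colSub Φ T)⁻¹ * (colSub Φ T)ᴴ *
          (colSub Φ Tᶜ * rowSub Tᶜ X)) ⟨i, h⟩ j
    else 0

section Frobenius

attribute [local instance] Matrix.frobeniusNormedAddCommGroup Matrix.frobeniusNormSMulClass

variable {m n : Type*} [Fintype m] [Fintype n]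

theorem frobNorm_eq_norm (A : Matrix m n ℂ) : frobNorm A = ‖A‖ := by
  simp only [frobNorm, frobenius_norm_def, Real.sqrt_eq_rpow, Real.rpow_two]

theorem frobNorm_smul {R : Type*} [NormedField R] [NormedSpace R ℂ] (a : R) (A : Matrix m n ℂ) :
    frobNorm (a • A) = ‖a‖ * frobNorm A := by
  simp only [frobNorm_eq_norm, norm_smul]

@[simp]
theorem frobNorm_zero : frobNorm (0 : Matrix m n ℂ) = 0 := by
  simp [frobNorm]

theorem frobNorm_pos {A : Matrix m n ℂ} (hA : A ≠ 0) : 0 < frobNorm A := by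
  rw [frobNorm_eq_norm]
  exact norm_pos_iff.mpr hA

end Frobenius

section TraceForm

variable {m n : Type*} [Fintype m] [Fintype n]

theorem frobNorm_sq_eq_re_trace (A : Matrix m n ℂ) : frobNorm A ^ 2 = (trace (Aᴴ * A)).re := by
  rw [frobNorm, Real.sq_sqrt (by positivity), Finset.sum_comm]
  simp only [trace, diag, mul_apply, conjTranspose_apply, Complex.re_sum, Complex.star_def,
    Complex.conj_mul', ← Complex.ofReal_pow, Complex.ofReal_re]

theorem frobNorm_add_sq_add_frobNorm_sub_sq (U W : Matrix m n ℂ) :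
    frobNorm (U + W) ^ 2 + frobNorm (U - W) ^ 2 = 2 * (frobNorm U ^ 2 + frobNorm W ^ 2) := by
  simp only [frobNorm_sq_eq_re_trace, conjTranspose_add, conjTranspose_sub, Matrix.add_mul,
    Matrix.mul_add, Matrix.sub_mul, Matrix.mul_sub, trace_add, trace_sub, Complex.add_re,
    Complex.sub_re]
  ring

theorem trace_conjTranspose_mul_mul_eq_star {G : Matrix m m ℂ} (hG : G.IsHermitian)
    (U W : Matrix m n ℂ) : trace (Wᴴ * (G * U)) = star (trace (Uᴴ * (G * W))) := by
  rw [← trace_conjTranspose, conjTranspose_mul, conjTranspose_mul, hG.eq,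
    conjTranspose_conjTranspose, Matrix.mul_assoc]

theorem re_trace_polarization {G : Matrix m m ℂ} (hG : G.IsHermitian) (U W : Matrix m n ℂ) :
    4 * (trace (Uᴴ * (G * W))).re =
      (trace ((U + W)ᴴ * (G * (U + W)))).re - (trace ((U - W)ᴴ * (G * (U - W)))).re := by
  simp only [conjTranspose_add, conjTranspose_sub, Matrix.add_mul, Matrix.mul_add, Matrix.sub_mul,
    Matrix.mul_sub, trace_add, trace_sub, Complex.add_re, Complex.sub_re,
    trace_conjTranspose_mul_mul_eq_star hG U W, Complex.star_def, Complex.conj_re]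
  ring

theorem re_trace_smul_conjTranspose_mul_smul (G : Matrix m m ℂ) (a b : ℝ) (U W : Matrix m n ℂ) :
    (trace ((a • U)ᴴ * (G * (b • W)))).re = a * b * (trace (Uᴴ * (G * W))).re := by
  rw [conjTranspose_smul, star_trivial, Matrix.mul_smul, Matrix.smul_mul, Matrix.mul_smul,
    trace_smul, trace_smul, Complex.smul_re, Complex.smul_re, smul_eq_mul, smul_eq_mul]
  ring

end TraceForm

theorem Complex.norm_le_of_forall_re_mul_le {z : ℂ} {K : ℝ}
    (h : ∀ c : ℂ, ‖c‖ = 1 → (c * z).re ≤ K) : ‖z‖ ≤ K := by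
  have hunit : ‖exp (↑(-z.arg) * I)‖ = 1 := norm_exp_ofReal_mul_I _
  have hrot : exp (↑(-z.arg) * I) * z = ‖z‖ := by
    conv_lhs => arg 2; rw [← norm_mul_exp_arg_mul_I z]
    rw [mul_left_comm, ← exp_add, ofReal_neg, neg_mul, neg_add_cancel, exp_zero, mul_one]
  have hre := h _ hunit
  rwa [hrot, ofReal_re] at hre

section RowSupport

variable {N L : ℕ}

theorem mem_rowSupp {X : Matrix (Fin N) (Fin L) ℂ} {i : Fin N} : i ∈ rowSupp X ↔ X i ≠ 0 := by
  simp [rowSupp]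

theorem rowSupp_subset_union {X U W : Matrix (Fin N) (Fin L) ℂ}
    (h : ∀ i, U i = 0 → W i = 0 → X i = 0) : rowSupp X ⊆ rowSupp U ∪ rowSupp W := by
  intro i
  simp only [Finset.mem_union, mem_rowSupp]
  contrapose!
  exact fun ⟨hU, hW⟩ => h i hU hW

theorem rowSupp_add_subset (U W : Matrix (Fin N) (Fin L) ℂ) :
    rowSupp (U + W) ⊆ rowSupp U ∪ rowSupp W :=
  rowSupp_subset_union fun i hU hW => show U i + W i = 0 by rw [hU, hW, add_zero]

theorem rowSupp_sub_subset (U W : Matrix (Fin N) (Fin L) ℂ) :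
    rowSupp (U - W) ⊆ rowSupp U ∪ rowSupp W :=
  rowSupp_subset_union fun i hU hW => show U i - W i = 0 by rw [hU, hW, sub_zero]

theorem rowSupp_smul_subset {R : Type*} [SMulZeroClass R ℂ] (a : R)
    (U : Matrix (Fin N) (Fin L) ℂ) : rowSupp (a • U) ⊆ rowSupp U := by
  intro i
  simp only [mem_rowSupp]
  contrapose!
  intro hU
  change a • U i = 0
  rw [hU, smul_zero]

end RowSupport

namespace IsRIC

variable {M N L t : ℕ} {Φ : Matrix (Fin M) (Fin N) ℂ} {δ : ℝ}

theorem abs_re_trace_le (hRIC : IsRIC L Φ t δ) {Z : Matrix (Fin N) (Fin L) ℂ}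
    (hZ : (rowSupp Z).card ≤ t) :
    |(trace (Zᴴ * ((1 - Φᴴ * Φ) * Z))).re| ≤ δ * frobNorm Z ^ 2 := by
  have hquad : (trace (Zᴴ * ((1 - Φᴴ * Φ) * Z))).re = frobNorm Z ^ 2 - frobNorm (Φ * Z) ^ 2 := by
    rw [frobNorm_sq_eq_re_trace, frobNorm_sq_eq_re_trace, Matrix.sub_mul, Matrix.one_mul,
      Matrix.mul_sub, trace_sub, Complex.sub_re, conjTranspose_mul, Matrix.mul_assoc,
      Matrix.mul_assoc]
  obtain ⟨hlower, hupper⟩ := hRIC Z hZ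
  rw [hquad, abs_le]
  constructor <;> linarith

theorem re_trace_le (hRIC : IsRIC L Φ t δ) {U W : Matrix (Fin N) (Fin L) ℂ}
    (hUW : (rowSupp U ∪ rowSupp W).card ≤ t) :
    (trace (Uᴴ * ((1 - Φᴴ * Φ) * W))).re ≤ δ / 2 * (frobNorm U ^ 2 + frobNorm W ^ 2) := by
  have hG : (1 - Φᴴ * Φ).IsHermitian :=
    isHermitian_one.sub (isHermitian_conjTranspose_mul_self Φ)
  have hadd := (hRIC.abs_re_trace_le
    ((Finset.card_le_card (rowSupp_add_subset U W)).trans hUW)).trans' (le_abs_self _)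
  have hsub := (hRIC.abs_re_trace_le
    ((Finset.card_le_card (rowSupp_sub_subset U W)).trans hUW)).trans' (neg_le_abs _)
  have hpolar := re_trace_polarization hG U W
  have hpar : δ * frobNorm (U + W) ^ 2 + δ * frobNorm (U - W) ^ 2 =
      2 * δ * (frobNorm U ^ 2 + frobNorm W ^ 2) := by
    rw [← mul_add, frobNorm_add_sq_add_frobNorm_sub_sq]
    ring
  linarith

theorem re_trace_le_mul (hRIC : IsRIC L Φ t δ) {U V : Matrix (Fin N) (Fin L) ℂ}
    (hUV : (rowSupp U ∪ rowSupp V).card ≤ t) :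
    (trace (Uᴴ * ((1 - Φᴴ * Φ) * V))).re ≤ δ * frobNorm U * frobNorm V := by
  rcases eq_or_ne U 0 with rfl | hU
  · simp
  rcases eq_or_ne V 0 with rfl | hV
  · simp
  have hUpos := frobNorm_pos hU
  have hVpos := frobNorm_pos hV
  have hnorm := hRIC.re_trace_le (U := (frobNorm U)⁻¹ • U) (W := (frobNorm V)⁻¹ • V)
    ((Finset.card_le_card (Finset.union_subset_union (rowSupp_smul_subset _ U)
      (rowSupp_smul_subset _ V))).trans hUV)
  rw [re_trace_smul_conjTranspose_mul_smul, frobNorm_smul, frobNorm_smul,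
    Real.norm_of_nonneg (inv_nonneg.mpr hUpos.le), Real.norm_of_nonneg (inv_nonneg.mpr hVpos.le),
    inv_mul_cancel₀ hUpos.ne', inv_mul_cancel₀ hVpos.ne', ← mul_inv,
    inv_mul_le_iff₀ (mul_pos hUpos hVpos)] at hnorm
  linarith

end IsRIC

theorem stmt0_general {M N L t : ℕ} (Φ : Matrix (Fin M) (Fin N) ℂ) (δ : ℝ)
    (hRIC : IsRIC L Φ t δ) (U V : Matrix (Fin N) (Fin L) ℂ)
    (hsupp : (rowSupp U ∪ rowSupp V).card ≤ t) :
    ‖Matrix.trace (Uᴴ * ((1 - Φᴴ * Φ) * V))‖ ≤ δ * frobNorm U * frobNorm V := by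
  refine Complex.norm_le_of_forall_re_mul_le fun c hc => ?_
  have hrot := hRIC.re_trace_le_mul (U := U) (V := c • V)
    ((Finset.card_le_card (Finset.union_subset_union subset_rfl (rowSupp_smul_subset c V))).trans
      hsupp)
  rwa [Matrix.mul_smul, Matrix.mul_smul, trace_smul, smul_eq_mul, frobNorm_smul, hc,
    one_mul] at hrot

/-- RIP inner-product estimate (first part of Lemma 4 of the paper). -/
theorem stmt0 {M N L t : ℕ} (Φ : Matrix (Fin M) (Fin N) ℂ) (δ : ℝ) (hδ : 0 ≤ δ)
    (hRIC : IsRIC L Φ t δ) (U V : Matrix (Fin N) (Fin L) ℂ)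
    (hsupp : (rowSupp U ∪ rowSupp V).card ≤ t) :
    ‖Matrix.trace (Uᴴ * ((1 - Φᴴ * Φ) * V))‖ ≤ δ * frobNorm U * frobNorm V :=
  stmt0_general Φ δ hRIC U V hsupp
end

section
/- Let Φ ∈ ℂ^{M×N} with ΦΦ* invertible, and let γ ≥ 0 be a preconditioned restricted isometry constant of order t for Φ. If U, V ∈ ℂ^{N×L} satisfy |supp(U) ∪ supp(V)| ≤ t, then |tr(U* (I − Φ*(ΦΦ*)⁻¹Φ) V)| ≤ γ · ‖U‖_F · ‖V‖_F. -/
open Matrix BigOperators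

/-
`P = Φᴴ(ΦΦᴴ)⁻¹Φ` is the orthogonal projection onto the row space of `Φ`, so `Q = 1 - P` is an
orthogonal projection as well, and the P-RIC inequality says exactly `‖QZ‖_F² ≤ γ‖Z‖_F²` for
`t` row-sparse `Z`. Since `Q = QᴴQ`, `tr(Uᴴ Q V) = tr((QU)ᴴ (QV))`, and Cauchy–Schwarz bounds it
by `‖QU‖_F ‖QV‖_F ≤ √γ‖U‖_F · √γ‖V‖_F`.
-/

section Frobenius

variable {m n : Type*} [Fintype m] [Fintype n]

lemma frobNorm_nonneg (A : Matrix m n ℂ) : 0 ≤ frobNorm A := Real.sqrt_nonneg _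

lemma trace_conjTranspose_mul_self_eq_frobNorm_sq (A : Matrix m n ℂ) :
    trace (Aᴴ * A) = ((frobNorm A ^ 2 : ℝ) : ℂ) := by
  rw [frobNorm, Real.sq_sqrt (by positivity), Finset.sum_comm]
  push_cast
  simp only [trace, diag, mul_apply, conjTranspose_apply]
  congr 1; ext j; congr 1; ext i
  simp [Complex.conj_mul']

lemma norm_trace_conjTranspose_mul_le (A B : Matrix m n ℂ) :
    ‖trace (Aᴴ * B)‖ ≤ frobNorm A * frobNorm B := by
  let a : EuclideanSpace ℂ (m × n) := WithLp.toLp 2 fun p => A p.1 p.2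
  let b : EuclideanSpace ℂ (m × n) := WithLp.toLp 2 fun p => B p.1 p.2
  have htrace : trace (Aᴴ * B) = inner ℂ a b := by
    simp only [trace, diag, mul_apply, conjTranspose_apply, PiLp.inner_apply,
      RCLike.inner_apply, a, b, Fintype.sum_prod_type]
    rw [Finset.sum_comm]; simp only [mul_comm (B _ _)]; rfl
  have ha : ‖a‖ = frobNorm A := by simp [EuclideanSpace.norm_eq, frobNorm, Fintype.sum_prod_type, a]
  have hb : ‖b‖ = frobNorm B := by simp [EuclideanSpace.norm_eq, frobNorm, Fintype.sum_prod_type, b]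
  rw [htrace, ← ha, ← hb]
  exact norm_inner_le_norm a b

end Frobenius

section Projection

variable {l m n : Type*} [Fintype m] [Fintype n]

lemma isHermitian_conjTranspose_mul_inv_mul [DecidableEq m] (Φ : Matrix m n ℂ) :
    (Φᴴ * (Φ * Φᴴ)⁻¹ * Φ).IsHermitian := by
  have hA : (Φ * Φᴴ)ᴴ = Φ * Φᴴ := by rw [conjTranspose_mul, conjTranspose_conjTranspose]
  rw [IsHermitian, conjTranspose_mul, conjTranspose_mul, conjTranspose_nonsing_inv, hA,
    conjTranspose_conjTranspose, Matrix.mul_assoc]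

lemma isIdempotentElem_conjTranspose_mul_inv_mul [DecidableEq m] (Φ : Matrix m n ℂ)
    (hinv : IsUnit (Φ * Φᴴ)) : IsIdempotentElem (Φᴴ * (Φ * Φᴴ)⁻¹ * Φ) := by
  have hcancel : (Φ * Φᴴ)⁻¹ * (Φ * Φᴴ) = 1 :=
    nonsing_inv_mul _ ((isUnit_iff_isUnit_det _).mp hinv)
  simp only [IsIdempotentElem, Matrix.mul_assoc]
  rw [← Matrix.mul_assoc Φ Φᴴ, ← Matrix.mul_assoc (Φ * Φᴴ)⁻¹, hcancel, Matrix.one_mul]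

lemma conjTranspose_mul_mul_eq_of_isHermitian_of_isIdempotentElem {Q : Matrix n n ℂ}
    (hQ : Q.IsHermitian) (hQQ : IsIdempotentElem Q) (U V : Matrix n l ℂ) :
    Uᴴ * (Q * V) = (Q * U)ᴴ * (Q * V) := by
  rw [conjTranspose_mul, hQ.eq, Matrix.mul_assoc, ← Matrix.mul_assoc Q Q V, hQQ.eq]

lemma frobNorm_one_sub_mul_sq [Fintype l] [DecidableEq n] {P : Matrix n n ℂ}
    (hP : P.IsHermitian) (hPP : IsIdempotentElem P) (Z : Matrix n l ℂ) :
    frobNorm ((1 - P) * Z) ^ 2 = frobNorm Z ^ 2 - (trace (Zᴴ * (P * Z))).re := by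
  have hsplit : ((1 - P) * Z)ᴴ * ((1 - P) * Z) = Zᴴ * Z - Zᴴ * (P * Z) := by
    rw [← conjTranspose_mul_mul_eq_of_isHermitian_of_isIdempotentElem
      (isHermitian_one.sub hP) hPP.one_sub, Matrix.sub_mul, Matrix.one_mul, Matrix.mul_sub]
  have hre := congrArg (fun A => (trace A).re) hsplit
  simp only [trace_sub, trace_conjTranspose_mul_self_eq_frobNorm_sq, Complex.sub_re,
    Complex.ofReal_re] at hre
  linarith

end Projection

namespace IsPRIC

variable {M N L t : ℕ} {Φ : Matrix (Fin M) (Fin N) ℂ} {γ : ℝ}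

lemma frobNorm_sq_le (hPRIC : IsPRIC L Φ t γ) (hinv : IsUnit (Φ * Φᴴ))
    {Z : Matrix (Fin N) (Fin L) ℂ} (hZ : (rowSupp Z).card ≤ t) :
    frobNorm ((1 - Φᴴ * (Φ * Φᴴ)⁻¹ * Φ) * Z) ^ 2 ≤ γ * frobNorm Z ^ 2 := by
  have hlower := hPRIC Z hZ
  have htrace : (Φ * Z)ᴴ * ((Φ * Φᴴ)⁻¹ * (Φ * Z)) = Zᴴ * (Φᴴ * (Φ * Φᴴ)⁻¹ * Φ * Z) := by
    simp only [conjTranspose_mul, Matrix.mul_assoc]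
  rw [htrace] at hlower
  rw [frobNorm_one_sub_mul_sq (isHermitian_conjTranspose_mul_inv_mul Φ)
    (isIdempotentElem_conjTranspose_mul_inv_mul Φ hinv)]
  linarith

lemma frobNorm_le (hPRIC : IsPRIC L Φ t γ) (hinv : IsUnit (Φ * Φᴴ))
    {Z : Matrix (Fin N) (Fin L) ℂ} (hZ : (rowSupp Z).card ≤ t) :
    frobNorm ((1 - Φᴴ * (Φ * Φᴴ)⁻¹ * Φ) * Z) ≤ √γ * frobNorm Z := by
  calc frobNorm ((1 - Φᴴ * (Φ * Φᴴ)⁻¹ * Φ) * Z)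
      = √(frobNorm ((1 - Φᴴ * (Φ * Φᴴ)⁻¹ * Φ) * Z) ^ 2) := (Real.sqrt_sq (frobNorm_nonneg _)).symm
    _ ≤ √(γ * frobNorm Z ^ 2) := Real.sqrt_le_sqrt (hPRIC.frobNorm_sq_le hinv hZ)
    _ = √γ * frobNorm Z := by
        rw [Real.sqrt_mul' _ (by positivity), Real.sqrt_sq (frobNorm_nonneg Z)]

end IsPRIC

/-- preconditioned RIP inner-product estimate (first part of Remark 5). -/
theorem stmt2 {M N L t : ℕ} (Φ : Matrix (Fin M) (Fin N) ℂ) (hinv : IsUnit (Φ * Φᴴ))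
    (γ : ℝ) (hγ : 0 ≤ γ) (hPRIC : IsPRIC L Φ t γ) (U V : Matrix (Fin N) (Fin L) ℂ)
    (hsupp : (rowSupp U ∪ rowSupp V).card ≤ t) :
    ‖Matrix.trace (Uᴴ * ((1 - Φᴴ * (Φ * Φᴴ)⁻¹ * Φ) * V))‖ ≤
      γ * frobNorm U * frobNorm V := by
  set Q := 1 - Φᴴ * (Φ * Φᴴ)⁻¹ * Φ
  have hU : frobNorm (Q * U) ≤ √γ * frobNorm U :=
    hPRIC.frobNorm_le hinv ((Finset.card_le_card Finset.subset_union_left).trans hsupp)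
  have hV : frobNorm (Q * V) ≤ √γ * frobNorm V :=
    hPRIC.frobNorm_le hinv ((Finset.card_le_card Finset.subset_union_right).trans hsupp)
  calc ‖trace (Uᴴ * (Q * V))‖
      = ‖trace ((Q * U)ᴴ * (Q * V))‖ := by
        rw [conjTranspose_mul_mul_eq_of_isHermitian_of_isIdempotentElem
          (isHermitian_one.sub (isHermitian_conjTranspose_mul_inv_mul Φ))
          (isIdempotentElem_conjTranspose_mul_inv_mul Φ hinv).one_sub]
    _ ≤ frobNorm (Q * U) * frobNorm (Q * V) := norm_trace_conjTranspose_mul_le _ _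
    _ ≤ (√γ * frobNorm U) * (√γ * frobNorm V) :=
        mul_le_mul hU hV (frobNorm_nonneg _) (mul_nonneg (Real.sqrt_nonneg _) (frobNorm_nonneg _))
    _ = γ * frobNorm U * frobNorm V := by
        rw [mul_mul_mul_comm, Real.mul_self_sqrt hγ, mul_assoc]
end

section
/- Let Φ ∈ ℂ^{M×N} with ΦΦ* invertible, and let θ ≥ 0 be an upper restricted isometry constant of order t for (ΦΦ*)⁻¹Φ. Then for every E ∈ ℂ^{M×L} and every index set T ⊆ {1,…,N} with |T| ≤ t, one has ‖[Φ*(ΦΦ*)⁻¹E]_(T)‖_F ≤ √(1+θ) · ‖E‖_F. -/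
open Matrix BigOperators

/-! With `A = (ΦΦᴴ)⁻¹Φ` we have `Φᴴ(ΦΦᴴ)⁻¹E = AᴴE`. For `Y = (AᴴE)_(T)` the Frobenius inner
product gives `‖Y‖² = ⟨Y, AᴴE⟩ = ⟨AY, E⟩ ≤ ‖AY‖ ‖E‖`, and `Y` is `|T|` row-sparse, so
`‖AY‖² ≤ (1+θ)‖Y‖²`. Combining the two, `‖Y‖² ≤ (1+θ)‖E‖²`. -/

section Frobenius

variable {m n : Type*} [Fintype m] [Fintype n]

noncomputable def frobVec (A : Matrix m n ℂ) : EuclideanSpace ℂ (m × n) :=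
  WithLp.toLp 2 fun p => A p.1 p.2

lemma frobNorm_eq_norm_frobVec (A : Matrix m n ℂ) : frobNorm A = ‖frobVec A‖ := by
  rw [frobNorm, EuclideanSpace.norm_eq, Fintype.sum_prod_type]
  rfl

lemma inner_frobVec (A B : Matrix m n ℂ) :
    inner ℂ (frobVec A) (frobVec B) = trace (Aᴴ * B) := by
  rw [PiLp.inner_apply, Fintype.sum_prod_type, Finset.sum_comm]
  simp [frobVec, trace, mul_apply, mul_comm]

lemma inner_frobVec_conjTranspose_mul {l : Type*} [Fintype l] (B : Matrix l m ℂ)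
    (X : Matrix m n ℂ) (E : Matrix l n ℂ) :
    inner ℂ (frobVec X) (frobVec (Bᴴ * E)) = inner ℂ (frobVec (B * X)) (frobVec E) := by
  rw [inner_frobVec, inner_frobVec, conjTranspose_mul, Matrix.mul_assoc]

end Frobenius

section RowRestrict

variable {N L : ℕ}

lemma card_rowSupp_rowRestrict_le (T : Finset (Fin N)) (X : Matrix (Fin N) (Fin L) ℂ) :
    (rowSupp (rowRestrict T X)).card ≤ T.card := by
  classical
  refine Finset.card_le_card fun i hi => ?_
  rw [rowSupp, Finset.mem_filter] at hi
  by_contra hiT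
  exact hi.2 (funext fun j => by simp [rowRestrict, hiT])

lemma inner_frobVec_rowRestrict (T : Finset (Fin N)) (X : Matrix (Fin N) (Fin L) ℂ) :
    inner ℂ (frobVec (rowRestrict T X)) (frobVec X) =
      inner ℂ (frobVec (rowRestrict T X)) (frobVec (rowRestrict T X)) := by
  simp only [PiLp.inner_apply, frobVec, rowRestrict]
  refine Finset.sum_congr rfl fun p _ => ?_
  split_ifs <;> simp

lemma frobNorm_rowRestrict_conjTranspose_mul_sq {M : ℕ} (A : Matrix (Fin M) (Fin N) ℂ)
    (E : Matrix (Fin M) (Fin L) ℂ) (T : Finset (Fin N)) :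
    frobNorm (rowRestrict T (Aᴴ * E)) ^ 2 =
      RCLike.re (inner ℂ (frobVec (A * rowRestrict T (Aᴴ * E))) (frobVec E)) := by
  rw [← inner_frobVec_conjTranspose_mul, inner_frobVec_rowRestrict, inner_self_eq_norm_sq,
    frobNorm_eq_norm_frobVec]

lemma frobNorm_rowRestrict_conjTranspose_mul_sq_le {M : ℕ} (A : Matrix (Fin M) (Fin N) ℂ)
    (E : Matrix (Fin M) (Fin L) ℂ) (T : Finset (Fin N)) :
    frobNorm (rowRestrict T (Aᴴ * E)) ^ 2 ≤
      frobNorm (A * rowRestrict T (Aᴴ * E)) * frobNorm E := by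
  rw [frobNorm_rowRestrict_conjTranspose_mul_sq, frobNorm_eq_norm_frobVec,
    frobNorm_eq_norm_frobVec]
  exact re_inner_le_norm _ _

end RowRestrict

lemma le_sqrt_mul_of_sq_le_mul {y a e c : ℝ} (hy : 0 ≤ y) (ha : 0 ≤ a) (he : 0 ≤ e)
    (hya : y ^ 2 ≤ a * e) (hay : a ^ 2 ≤ c * y ^ 2) : y ≤ Real.sqrt c * e := by
  rcases hy.eq_or_lt with rfl | hy
  · positivity
  have hsq : y ^ 2 ≤ c * e ^ 2 := by
    have : y ^ 2 * y ^ 2 ≤ c * e ^ 2 * y ^ 2 :=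
      calc y ^ 2 * y ^ 2 ≤ (a * e) * (a * e) :=
            mul_le_mul hya hya (by positivity) (by positivity)
        _ = a ^ 2 * e ^ 2 := by ring
        _ ≤ c * y ^ 2 * e ^ 2 := by gcongr
        _ = c * e ^ 2 * y ^ 2 := by ring
    exact le_of_mul_le_mul_right this (by positivity)
  calc y = Real.sqrt (y ^ 2) := (Real.sqrt_sq hy.le).symm
    _ ≤ Real.sqrt (c * e ^ 2) := Real.sqrt_le_sqrt hsq
    _ = Real.sqrt c * e := by rw [Real.sqrt_mul' _ (sq_nonneg e), Real.sqrt_sq he]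

theorem stmt4_general {M N L t : ℕ} (Φ : Matrix (Fin M) (Fin N) ℂ)
    (θ : ℝ) (hURIC : IsUpperRIC L ((Φ * Φᴴ)⁻¹ * Φ) t θ)
    (E : Matrix (Fin M) (Fin L) ℂ) (T : Finset (Fin N)) (hT : T.card ≤ t) :
    frobNorm (rowRestrict T (Φᴴ * ((Φ * Φᴴ)⁻¹ * E))) ≤ Real.sqrt (1 + θ) * frobNorm E := by
  set A := (Φ * Φᴴ)⁻¹ * Φ
  have hA : Φᴴ * ((Φ * Φᴴ)⁻¹ * E) = Aᴴ * E := by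
    rw [conjTranspose_mul, conjTranspose_nonsing_inv, conjTranspose_mul,
      conjTranspose_conjTranspose, Matrix.mul_assoc]
  rw [hA]
  exact le_sqrt_mul_of_sq_le_mul (Real.sqrt_nonneg _) (Real.sqrt_nonneg _) (Real.sqrt_nonneg _)
    (frobNorm_rowRestrict_conjTranspose_mul_sq_le A E T)
    (hURIC _ ((card_rowSupp_rowRestrict_le T _).trans hT))

/-- Lemma 6 of the paper. -/
theorem stmt4 {M N L t : ℕ} (Φ : Matrix (Fin M) (Fin N) ℂ) (hinv : IsUnit (Φ * Φᴴ))
    (θ : ℝ) (hθ : 0 ≤ θ) (hURIC : IsUpperRIC L ((Φ * Φᴴ)⁻¹ * Φ) t θ)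
    (E : Matrix (Fin M) (Fin L) ℂ) (T : Finset (Fin N)) (hT : T.card ≤ t) :
    frobNorm (rowRestrict T (Φᴴ * ((Φ * Φᴴ)⁻¹ * E))) ≤ Real.sqrt (1 + θ) * frobNorm E :=
  stmt4_general Φ θ hURIC E T hT
end

section
/- Let X̃ ∈ ℂ^{N×L}, Q ∈ ℂ^{N×L} with orthonormal columns (Q*Q = I_L), and R ∈ ℂ^{L×L} invertible with X̃ = QR. Let σ_min(R) and σ_max(R) denote the smallest and largest singular values of R. If T ⊆ {1,…,N} is such that ‖Q_{i·}‖₂ ≥ ‖Q_{j·}‖₂ for every i ∈ T and j ∉ T (T collects rows of Q of largest ℓ₂ norm), and S ⊆ {1,…,N} satisfies |S| ≤ |T|, then σ_max(R)⁻¹ · ‖X̃_(S)‖_F ≤ σ_min(R)⁻¹ · ‖X̃_(T)‖_F. -/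
open Matrix BigOperators

/-!
Row `i` of `X = Q R` is `Q i ᵥ* R = star (Rᴴ *ᵥ star (Q i))`, so its length lies between
`σ_min(R) ‖Q i‖` and `σ_max(R) ‖Q i‖`: passing to `Rᴴ` costs nothing because the `ℓ²` operator
norm satisfies `‖Rᴴ‖ = ‖R‖`, while `‖R‖ ≤ σ_max(R)` and `‖R⁻¹‖ ≤ σ_min(R)⁻¹`. Summing over rows,
`σ_max(R)⁻¹ ‖X_(S)‖_F ≤ ‖Q_(S)‖_F ≤ ‖Q_(T)‖_F ≤ σ_min(R)⁻¹ ‖X_(T)‖_F`, the middle step because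
`T` collects the longest rows of `Q` and `|S| ≤ |T|`.
-/

open scoped Matrix.Norms.L2Operator

theorem Finset.sum_le_sum_of_card_le_of_forall_le {ι M : Type*} [DecidableEq ι]
    [AddCommMonoid M] [LinearOrder M] [IsOrderedAddMonoid M] {f : ι → M} (hf : ∀ i, 0 ≤ f i)
    {S T : Finset ι} (hT : ∀ i ∈ T, ∀ j ∉ T, f j ≤ f i) (hS : S.card ≤ T.card) :
    ∑ i ∈ S, f i ≤ ∑ i ∈ T, f i := by
  have hcard : (S \ T).card ≤ (T \ S).card := by
    have := Finset.card_sdiff_add_card_inter S T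
    have := Finset.card_sdiff_add_card_inter T S
    rw [Finset.inter_comm] at this
    omega
  have hdiff : ∑ i ∈ S \ T, f i ≤ ∑ i ∈ T \ S, f i := by
    obtain h | ⟨i₀, hi₀, hmin⟩ := (T \ S).eq_empty_or_nonempty.imp_right
      fun h => (T \ S).exists_min_image f h
    · have hST : S \ T = ∅ := by
        rw [h, Finset.card_empty, Nat.le_zero, Finset.card_eq_zero] at hcard
        exact hcard
      rw [hST, h]
    calc ∑ i ∈ S \ T, f i ≤ (S \ T).card • f i₀ :=
          Finset.sum_le_card_nsmul _ _ _ fun j hj =>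
            hT i₀ (Finset.mem_sdiff.mp hi₀).1 j (Finset.mem_sdiff.mp hj).2
      _ ≤ (T \ S).card • f i₀ := nsmul_le_nsmul_left (hf i₀) hcard
      _ ≤ ∑ i ∈ T \ S, f i := Finset.card_nsmul_le_sum _ _ _ hmin
  rw [← Finset.sum_inter_add_sum_sdiff S T, ← Finset.sum_inter_add_sum_sdiff T S,
    Finset.inter_comm]
  exact add_le_add_right hdiff _

section VecNorm

variable {n : Type*} [Fintype n]

theorem vecNorm_eq_norm_toLp (v : n → ℂ) :
    vecNorm v = ‖(WithLp.toLp 2 v : EuclideanSpace ℂ n)‖ := by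
  rw [EuclideanSpace.norm_eq]
  rfl

theorem vecNorm_nonneg (v : n → ℂ) : 0 ≤ vecNorm v := Real.sqrt_nonneg _

theorem vecNorm_eq_zero {v : n → ℂ} : vecNorm v = 0 ↔ v = 0 := by
  rw [vecNorm_eq_norm_toLp, norm_eq_zero, WithLp.toLp_eq_zero]

theorem vecNorm_smul (c : ℂ) (v : n → ℂ) : vecNorm (c • v) = ‖c‖ * vecNorm v := by
  rw [vecNorm_eq_norm_toLp, vecNorm_eq_norm_toLp, WithLp.toLp_smul, norm_smul]

theorem vecNorm_star (v : n → ℂ) : vecNorm (star v) = vecNorm v := by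
  simp [vecNorm]

theorem vecNorm_single [DecidableEq n] (i : n) : vecNorm (Pi.single i (1 : ℂ)) = 1 := by
  rw [vecNorm_eq_norm_toLp, PiLp.toLp_single, PiLp.norm_single, norm_one]

variable {m : Type*} [Fintype m] [DecidableEq n]

theorem vecNorm_mulVec_le (A : Matrix m n ℂ) (v : n → ℂ) :
    vecNorm (A *ᵥ v) ≤ ‖A‖ * vecNorm v := by
  rw [vecNorm_eq_norm_toLp, vecNorm_eq_norm_toLp]
  exact A.l2_opNorm_mulVec (WithLp.toLp 2 v)

theorem vecNorm_vecMul_le [DecidableEq m] (A : Matrix m n ℂ) (v : m → ℂ) :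
    vecNorm (v ᵥ* A) ≤ ‖A‖ * vecNorm v := by
  rw [← vecNorm_star, Matrix.star_vecMul, ← A.l2_opNorm_conjTranspose, ← vecNorm_star v]
  exact vecNorm_mulVec_le Aᴴ (star v)

end VecNorm

section SingularValues

variable {L : ℕ} (R : Matrix (Fin L) (Fin L) ℂ)

theorem exists_mem_sigmaSet_vecNorm_mulVec_eq {v : Fin L → ℂ} (hv : v ≠ 0) :
    ∃ c ∈ sigmaSet R, vecNorm (R *ᵥ v) = c * vecNorm v := by
  have hpos : 0 < vecNorm v := (vecNorm_nonneg v).lt_of_ne' (vecNorm_eq_zero.not.mpr hv)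
  have hscale : ‖((vecNorm v : ℂ))⁻¹‖ = (vecNorm v)⁻¹ := by
    rw [norm_inv, Complex.norm_real, Real.norm_of_nonneg hpos.le]
  refine ⟨_, ⟨(vecNorm v : ℂ)⁻¹ • v, ?_, rfl⟩, ?_⟩
  · rw [vecNorm_smul, hscale, inv_mul_cancel₀ hpos.ne']
  · rw [Matrix.mulVec_smul, vecNorm_smul, hscale]
    field_simp

theorem sigmaMax_nonneg : 0 ≤ sigmaMax R :=
  Real.sSup_nonneg fun _ ⟨_, _, hc⟩ => hc ▸ vecNorm_nonneg _

theorem sigmaMin_nonneg : 0 ≤ sigmaMin R :=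
  Real.sInf_nonneg fun _ ⟨_, _, hc⟩ => hc ▸ vecNorm_nonneg _

theorem bddAbove_sigmaSet : BddAbove (sigmaSet R) := by
  refine ⟨‖R‖, ?_⟩
  rintro _ ⟨v, hv, rfl⟩
  simpa [hv] using vecNorm_mulVec_le R v

theorem vecNorm_mulVec_le_sigmaMax (v : Fin L → ℂ) :
    vecNorm (R *ᵥ v) ≤ sigmaMax R * vecNorm v := by
  rcases eq_or_ne v 0 with rfl | hv
  · simp [vecNorm]
  obtain ⟨c, hc, heq⟩ := exists_mem_sigmaSet_vecNorm_mulVec_eq R hv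
  rw [heq]
  exact mul_le_mul_of_nonneg_right (le_csSup (bddAbove_sigmaSet R) hc) (vecNorm_nonneg v)

theorem sigmaMin_mul_vecNorm_le (v : Fin L → ℂ) :
    sigmaMin R * vecNorm v ≤ vecNorm (R *ᵥ v) := by
  rcases eq_or_ne v 0 with rfl | hv
  · simp [vecNorm]
  obtain ⟨c, hc, heq⟩ := exists_mem_sigmaSet_vecNorm_mulVec_eq R hv
  have hbdd : BddBelow (sigmaSet R) := ⟨0, fun _ ⟨_, _, hc⟩ => hc ▸ vecNorm_nonneg _⟩
  rw [heq]
  exact mul_le_mul_of_nonneg_right (csInf_le hbdd hc) (vecNorm_nonneg v)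

theorem l2_opNorm_le_sigmaMax : ‖R‖ ≤ sigmaMax R := by
  rw [← Matrix.l2_opNorm_toEuclideanCLM]
  refine ContinuousLinearMap.opNorm_le_bound _ (sigmaMax_nonneg R) fun x => ?_
  obtain ⟨v, rfl⟩ : ∃ v, x = WithLp.toLp 2 v := ⟨x.ofLp, rfl⟩
  rw [Matrix.toEuclideanCLM_toLp, ← vecNorm_eq_norm_toLp, ← vecNorm_eq_norm_toLp]
  exact vecNorm_mulVec_le_sigmaMax R v

variable {R}

theorem sigmaMin_pos [Nonempty (Fin L)] (hR : IsUnit R) : 0 < sigmaMin R := by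
  have hdet : IsUnit R.det := (Matrix.isUnit_iff_isUnit_det R).mp hR
  have hinv : 0 < ‖R⁻¹‖ := norm_pos_iff.mpr fun h => by
    simpa [h] using Matrix.nonsing_inv_mul R hdet
  obtain ⟨i⟩ := ‹Nonempty (Fin L)›
  refine (inv_pos.mpr hinv).trans_le (le_csInf ⟨_, _, vecNorm_single i, rfl⟩ ?_)
  rintro _ ⟨v, hv, rfl⟩
  rw [inv_le_iff_one_le_mul₀' hinv, ← hv]
  calc vecNorm v = vecNorm (R⁻¹ *ᵥ (R *ᵥ v)) := by
        rw [Matrix.mulVec_mulVec, Matrix.nonsing_inv_mul R hdet, Matrix.one_mulVec]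
    _ ≤ ‖R⁻¹‖ * vecNorm (R *ᵥ v) := vecNorm_mulVec_le _ _

theorem l2_opNorm_nonsing_inv_le (hR : IsUnit R) : ‖R⁻¹‖ ≤ (sigmaMin R)⁻¹ := by
  cases isEmpty_or_nonempty (Fin L)
  · rw [Subsingleton.elim R⁻¹ 0, norm_zero]
    exact inv_nonneg.mpr (sigmaMin_nonneg R)
  have hdet : IsUnit R.det := (Matrix.isUnit_iff_isUnit_det R).mp hR
  have hpos := sigmaMin_pos hR
  rw [← Matrix.l2_opNorm_toEuclideanCLM]
  refine ContinuousLinearMap.opNorm_le_bound _ (inv_nonneg.mpr hpos.le) fun x => ?_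
  obtain ⟨v, rfl⟩ : ∃ v, x = WithLp.toLp 2 v := ⟨x.ofLp, rfl⟩
  rw [Matrix.toEuclideanCLM_toLp, ← vecNorm_eq_norm_toLp, ← vecNorm_eq_norm_toLp,
    le_inv_mul_iff₀ hpos]
  simpa [Matrix.mulVec_mulVec, Matrix.mul_nonsing_inv R hdet] using
    sigmaMin_mul_vecNorm_le R (R⁻¹ *ᵥ v)

end SingularValues

section Frobenius

variable {m n : Type*} [Fintype m] [Fintype n]

theorem frobNorm_eq_sqrt_sum_vecNorm_sq (Z : Matrix m n ℂ) :
    frobNorm Z = √(∑ i, vecNorm (Z i) ^ 2) := by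
  unfold frobNorm vecNorm
  congr 1
  exact Finset.sum_congr rfl fun i _ => (Real.sq_sqrt (by positivity)).symm

theorem frobNorm_le_mul_of_forall_vecNorm_le {n' : Type*} [Fintype n'] {Z : Matrix m n ℂ}
    {W : Matrix m n' ℂ} {c : ℝ} (hc : 0 ≤ c) (h : ∀ i, vecNorm (W i) ≤ c * vecNorm (Z i)) :
    frobNorm W ≤ c * frobNorm Z := by
  rw [frobNorm_eq_sqrt_sum_vecNorm_sq, frobNorm_eq_sqrt_sum_vecNorm_sq, ← Real.sqrt_sq hc,
    ← Real.sqrt_mul (sq_nonneg c), Finset.mul_sum]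
  refine Real.sqrt_le_sqrt (Finset.sum_le_sum fun i _ => ?_)
  rw [← mul_pow]
  exact pow_le_pow_left₀ (vecNorm_nonneg _) (h i) 2

variable {L : ℕ} (R : Matrix (Fin L) (Fin L) ℂ)

theorem frobNorm_mul_le_sigmaMax_mul (Z : Matrix m (Fin L) ℂ) :
    frobNorm (Z * R) ≤ sigmaMax R * frobNorm Z :=
  frobNorm_le_mul_of_forall_vecNorm_le (sigmaMax_nonneg R) fun i =>
    (vecNorm_vecMul_le R (Z i)).trans <|
      mul_le_mul_of_nonneg_right (l2_opNorm_le_sigmaMax R) (vecNorm_nonneg _)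

theorem frobNorm_le_inv_sigmaMin_mul (hR : IsUnit R) (Z : Matrix m (Fin L) ℂ) :
    frobNorm Z ≤ (sigmaMin R)⁻¹ * frobNorm (Z * R) := by
  have hdet : IsUnit R.det := (Matrix.isUnit_iff_isUnit_det R).mp hR
  refine frobNorm_le_mul_of_forall_vecNorm_le (inv_nonneg.mpr (sigmaMin_nonneg R)) fun i => ?_
  calc vecNorm (Z i) = vecNorm ((Z * R) i ᵥ* R⁻¹) := by
        rw [Matrix.mul_apply_eq_vecMul, Matrix.vecMul_vecMul, Matrix.mul_nonsing_inv R hdet,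
          Matrix.vecMul_one]
    _ ≤ ‖R⁻¹‖ * vecNorm ((Z * R) i) := vecNorm_vecMul_le _ _
    _ ≤ (sigmaMin R)⁻¹ * vecNorm ((Z * R) i) :=
        mul_le_mul_of_nonneg_right (l2_opNorm_nonsing_inv_le hR) (vecNorm_nonneg _)

end Frobenius

section RowRestrict

variable {N L : ℕ}

theorem rowRestrict_mul (S : Finset (Fin N)) (Q : Matrix (Fin N) (Fin L) ℂ)
    (R : Matrix (Fin L) (Fin L) ℂ) : rowRestrict S (Q * R) = rowRestrict S Q * R := by
  ext i j
  by_cases hi : i ∈ S <;> simp [rowRestrict, Matrix.mul_apply, hi]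

theorem frobNorm_rowRestrict (S : Finset (Fin N)) (Q : Matrix (Fin N) (Fin L) ℂ) :
    frobNorm (rowRestrict S Q) = √(∑ i ∈ S, vecNorm (Q i) ^ 2) := by
  classical
  have hrow : ∀ i, vecNorm (rowRestrict S Q i) ^ 2 = if i ∈ S then vecNorm (Q i) ^ 2 else 0 := by
    intro i
    by_cases hi : i ∈ S <;> simp [rowRestrict, vecNorm, hi]
  rw [frobNorm_eq_sqrt_sum_vecNorm_sq, Finset.sum_congr rfl fun i _ => hrow i,
    Finset.sum_ite_mem, Finset.univ_inter]

theorem frobNorm_rowRestrict_le_of_card_le {Q : Matrix (Fin N) (Fin L) ℂ}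
    {S T : Finset (Fin N)} (hT : ∀ i ∈ T, ∀ j ∉ T, vecNorm (Q j) ≤ vecNorm (Q i))
    (hS : S.card ≤ T.card) : frobNorm (rowRestrict S Q) ≤ frobNorm (rowRestrict T Q) := by
  rw [frobNorm_rowRestrict, frobNorm_rowRestrict]
  exact Real.sqrt_le_sqrt <| Finset.sum_le_sum_of_card_le_of_forall_le (fun _ => sq_nonneg _)
    (fun i hi j hj => pow_le_pow_left₀ (vecNorm_nonneg _) (hT i hi j hj) 2) hS

end RowRestrict

theorem stmt6_general {N L : ℕ} (X Q : Matrix (Fin N) (Fin L) ℂ) (R : Matrix (Fin L) (Fin L) ℂ)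
    (hR : IsUnit R) (hX : X = Q * R)
    (T S : Finset (Fin N))
    (hT : ∀ i ∈ T, ∀ j ∉ T, vecNorm (Q j) ≤ vecNorm (Q i))
    (hS : S.card ≤ T.card) :
    (sigmaMax R)⁻¹ * frobNorm (rowRestrict S X) ≤ (sigmaMin R)⁻¹ * frobNorm (rowRestrict T X) := by
  subst hX
  rw [rowRestrict_mul, rowRestrict_mul]
  calc (sigmaMax R)⁻¹ * frobNorm (rowRestrict S Q * R) ≤ frobNorm (rowRestrict S Q) :=
        inv_mul_le_of_le_mul₀ (sigmaMax_nonneg R) (Real.sqrt_nonneg _)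
          (frobNorm_mul_le_sigmaMax_mul R _)
    _ ≤ frobNorm (rowRestrict T Q) := frobNorm_rowRestrict_le_of_card_le hT hS
    _ ≤ (sigmaMin R)⁻¹ * frobNorm (rowRestrict T Q * R) := frobNorm_le_inv_sigmaMin_mul R hR _

/-- comparison of restricted Frobenius norms through an orthonormal factorization. -/
theorem stmt6 {N L : ℕ} (X Q : Matrix (Fin N) (Fin L) ℂ) (R : Matrix (Fin L) (Fin L) ℂ)
    (hQ : Qᴴ * Q = 1) (hR : IsUnit R) (hX : X = Q * R)
    (T S : Finset (Fin N))
    (hT : ∀ i ∈ T, ∀ j ∉ T, vecNorm (Q j) ≤ vecNorm (Q i))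
    (hS : S.card ≤ T.card) :
    (sigmaMax R)⁻¹ * frobNorm (rowRestrict S X) ≤ (sigmaMin R)⁻¹ * frobNorm (rowRestrict T X) :=
  stmt6_general X Q R hR hX T S hT hS
end
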